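/- Fix n ≥ 1, observed times U_1,…,U_n > 0, and weights C1_i, C2_i, C3_i ∈ [0,1] with C1_i + C2_i + C3_i = 1 for each i, and suppose Σ_{i=1}^n C1_i > 0, Σ_{i=1}^n C2_i > 0, and Σ_{i=1}^n C3_i > 0. Then ℓ is twice continuously differentiable on the open domain (0,∞) × (0,1) × (0,∞), all its mixed second-order partial derivatives (∂²ℓ/∂θ∂q, ∂²ℓ/∂θ∂γ, ∂²ℓ/∂q∂γ) vanish identically, and at every point of the domain the three pure second-order partial derivatives are strictly negative: ∂²ℓ/∂θ² = −(Σ C2_i)/θ² − Σ C3_i U_i² e^{−θU_i}/(1−e^{−θU_i})² < 0, ∂²ℓ/∂q² = −(Σ C2_i)/q² − (Σ C3_i)/(1−q)² < 0, and ∂²ℓ/∂γ² = −(Σ (1 − C2_i))/γ² < 0. Hence the Hessian of ℓ is a 3×3 diagonal matrix with strictly negative diagonal entries at every point, and is therefore negative definite everywhere on the domain. -/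

import Mathlib

open Real Finset Matrix

/-- The EM surrogate (expected complete-data log-likelihood). -/
noncomputable def ell {n : ℕ} (U C1 C2 C3 : Fin n → ℝ) (θ q γ : ℝ) : ℝ :=
  ∑ i, (C1 i * (Real.log γ - γ * U i - θ * U i)
      + C2 i * (Real.log θ - θ * U i - γ * U i + Real.log q)
      + C3 i * (Real.log (1 - q) + Real.log (1 - Real.exp (-θ * U i)) + Real.log γ - γ * U i))

/-!
`ℓ` splits as `ellTheta θ + ellQ q + ellGamma γ`, a sum of functions of one variable each, so
every mixed second partial vanishes and the Hessian is diagonal. Each marginal is strictly concave: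
`log θ`, `log q`, `log (1 - q)`, `log γ` are, and so is `θ ↦ log (1 - exp (-θ u))`, whose second
derivative is `-u² e^{-θu} / (1 - e^{-θu})²`; the positive class totals make the concavity strict.
-/

open Filter Topology

theorem hasDerivAt_deriv_of_eventually_hasDerivAt {𝕜 F : Type*} [NontriviallyNormedField 𝕜]
    [NormedAddCommGroup F] [NormedSpace 𝕜 F] {f f' : 𝕜 → F} {x : 𝕜} {f'' : F}
    (hf : ∀ᶠ y in 𝓝 x, HasDerivAt f (f' y) y) (hf' : HasDerivAt f' f'' x) :
    HasDerivAt (deriv f) f'' x :=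
  hf'.congr_of_eventuallyEq (hf.mono fun _ hy => hy.deriv)

theorem dotProduct_diagonal_mulVec_neg {ι R : Type*} [Fintype ι] [DecidableEq ι] [CommRing R]
    [LinearOrder R] [IsStrictOrderedRing R] {v : ι → R} (hv : ∀ i, v i < 0) {x : ι → R}
    (hx : x ≠ 0) : x ⬝ᵥ diagonal v *ᵥ x < 0 := by
  obtain ⟨j, hj⟩ := Function.ne_iff.mp hx
  simp only [dotProduct, mulVec_diagonal]
  refine sum_neg' (fun i _ => ?_) ⟨j, mem_univ j, ?_⟩
  · nlinarith [hv i, mul_self_nonneg (x i)]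
  · nlinarith [hv j, mul_self_pos.2 hj]

theorem one_sub_exp_neg_mul_ne_zero {t u : ℝ} (h : t * u ≠ 0) : 1 - exp (-t * u) ≠ 0 := by
  rw [sub_ne_zero, ne_comm, Ne, exp_eq_one_iff, neg_mul, neg_eq_zero]
  exact h

theorem hasDerivAt_exp_neg_mul (u t : ℝ) :
    HasDerivAt (fun t => exp (-t * u)) (-u * exp (-t * u)) t := by
  simpa [mul_comm] using ((hasDerivAt_id t).neg.mul_const u).exp

theorem hasDerivAt_log_one_sub_exp_neg_mul {t u : ℝ} (h : t * u ≠ 0) :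
    HasDerivAt (fun t => log (1 - exp (-t * u)))
      (u * exp (-t * u) / (1 - exp (-t * u))) t := by
  simpa using ((hasDerivAt_exp_neg_mul u t).const_sub 1).log (one_sub_exp_neg_mul_ne_zero h)

theorem hasDerivAt_mul_exp_neg_mul_div_one_sub_exp {t u : ℝ} (h : t * u ≠ 0) :
    HasDerivAt (fun t => u * exp (-t * u) / (1 - exp (-t * u)))
      (-(u ^ 2 * exp (-t * u) / (1 - exp (-t * u)) ^ 2)) t := by
  have hne := one_sub_exp_neg_mul_ne_zero h
  refine (((hasDerivAt_exp_neg_mul u t).const_mul u).div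
    ((hasDerivAt_exp_neg_mul u t).const_sub 1) hne).congr_deriv ?_
  field_simp
  ring

section Marginals

variable {n : ℕ} (U C1 C2 C3 : Fin n → ℝ)

noncomputable def ellTheta (θ : ℝ) : ℝ :=
  (∑ i, C2 i) * log θ + ∑ i, C3 i * log (1 - exp (-θ * U i)) - (∑ i, (C1 i + C2 i) * U i) * θ

noncomputable def ellQ (q : ℝ) : ℝ :=
  (∑ i, C2 i) * log q + (∑ i, C3 i) * log (1 - q)

noncomputable def ellGamma (γ : ℝ) : ℝ :=
  (∑ i, (C1 i + C3 i)) * log γ - (∑ i, (C1 i + C2 i + C3 i) * U i) * γ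

theorem ell_eq_add (θ q γ : ℝ) :
    ell U C1 C2 C3 θ q γ = ellTheta U C1 C2 C3 θ + ellQ C2 C3 q + ellGamma U C1 C2 C3 γ := by
  simp only [ell, ellTheta, ellQ, ellGamma, sum_mul, ← sum_add_distrib,
    ← sum_sub_distrib]
  exact sum_congr rfl fun i _ => by ring

theorem deriv_ell_theta (q γ : ℝ) :
    (deriv fun t => ell U C1 C2 C3 t q γ) = deriv (ellTheta U C1 C2 C3) := by
  simp_rw [ell_eq_add, add_assoc]
  exact deriv_add_const' _

theorem deriv_ell_q (θ γ : ℝ) :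
    (deriv fun s => ell U C1 C2 C3 θ s γ) = deriv (ellQ C2 C3) := by
  simp_rw [ell_eq_add]
  rw [deriv_add_const', deriv_const_add']

theorem deriv_ell_gamma (θ q : ℝ) :
    (deriv fun r => ell U C1 C2 C3 θ q r) = deriv (ellGamma U C1 C2 C3) := by
  simp_rw [ell_eq_add]
  exact deriv_const_add' _

theorem hasDerivAt_deriv_ellTheta (hU : ∀ i, U i ≠ 0) {θ : ℝ} (hθ : θ ≠ 0) :
    HasDerivAt (deriv (ellTheta U C1 C2 C3))
      (-(∑ i, C2 i) / θ ^ 2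
        - ∑ i, C3 i * U i ^ 2 * exp (-θ * U i) / (1 - exp (-θ * U i)) ^ 2) θ := by
  have hfirst : ∀ t ≠ 0, HasDerivAt (ellTheta U C1 C2 C3)
      ((∑ i, C2 i) * t⁻¹ + ∑ i, C3 i * (U i * exp (-t * U i) / (1 - exp (-t * U i)))
        - ∑ i, (C1 i + C2 i) * U i) t := fun t ht =>
    ((((hasDerivAt_log ht).const_mul (∑ i, C2 i)).fun_add
      (HasDerivAt.fun_sum (u := univ) fun i _ =>
        (hasDerivAt_log_one_sub_exp_neg_mul (mul_ne_zero ht (hU i))).const_mul (C3 i))).fun_sub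
      ((hasDerivAt_id' t).const_mul (∑ i, (C1 i + C2 i) * U i))).congr_deriv (by rw [mul_one])
  refine hasDerivAt_deriv_of_eventually_hasDerivAt ((eventually_ne_nhds hθ).mono hfirst) ?_
  refine ((((hasDerivAt_inv hθ).const_mul _).add (HasDerivAt.fun_sum (u := univ) fun i _ =>
    (hasDerivAt_mul_exp_neg_mul_div_one_sub_exp (mul_ne_zero hθ (hU i))).const_mul
      (C3 i))).sub_const _).congr_deriv ?_
  simp only [mul_neg, sum_neg_distrib, mul_div_assoc, mul_assoc]
  ring

theorem hasDerivAt_deriv_ellQ {q : ℝ} (hq0 : q ≠ 0) (hq1 : q ≠ 1) :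
    HasDerivAt (deriv (ellQ C2 C3)) (-(∑ i, C2 i) / q ^ 2 - (∑ i, C3 i) / (1 - q) ^ 2) q := by
  have hfirst : ∀ s, s ≠ 0 → s ≠ 1 → HasDerivAt (ellQ C2 C3)
      ((∑ i, C2 i) * s⁻¹ - (∑ i, C3 i) * (1 - s)⁻¹) s := fun s hs0 hs1 => by
    refine (((hasDerivAt_log hs0).const_mul (∑ i, C2 i)).fun_add
      ((((hasDerivAt_id' s).const_sub 1).log (sub_ne_zero.2 hs1.symm)).const_mul
        (∑ i, C3 i))).congr_deriv ?_
    ring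
  refine hasDerivAt_deriv_of_eventually_hasDerivAt
    (((eventually_ne_nhds hq0).and (eventually_ne_nhds hq1)).mono fun s hs => hfirst s hs.1 hs.2) ?_
  refine (((hasDerivAt_inv hq0).const_mul _).sub
    ((((hasDerivAt_id' q).const_sub 1).inv (sub_ne_zero.2 hq1.symm)).const_mul _)).congr_deriv ?_
  simp only [mul_neg, neg_neg, one_div]
  ring

theorem hasDerivAt_deriv_ellGamma {γ : ℝ} (hγ : γ ≠ 0) :
    HasDerivAt (deriv (ellGamma U C1 C2 C3)) (-(∑ i, (C1 i + C3 i)) / γ ^ 2) γ := by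
  have hfirst : ∀ r ≠ 0, HasDerivAt (ellGamma U C1 C2 C3)
      ((∑ i, (C1 i + C3 i)) * r⁻¹ - ∑ i, (C1 i + C2 i + C3 i) * U i) r := fun r hr =>
    (((hasDerivAt_log hr).const_mul (∑ i, (C1 i + C3 i))).fun_sub
      ((hasDerivAt_id' r).const_mul (∑ i, (C1 i + C2 i + C3 i) * U i))).congr_deriv
      (by rw [mul_one])
  refine hasDerivAt_deriv_of_eventually_hasDerivAt ((eventually_ne_nhds hγ).mono hfirst) ?_
  refine (((hasDerivAt_inv hγ).const_mul _).sub_const _).congr_deriv ?_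
  ring

theorem contDiffOn_ell (hU : ∀ i, U i ≠ 0) :
    ContDiffOn ℝ 2 (fun p : ℝ × ℝ × ℝ => ell U C1 C2 C3 p.1 p.2.1 p.2.2)
      (Set.Ioi 0 ×ˢ Set.Ioo 0 1 ×ˢ Set.Ioi 0) := by
  rintro ⟨θ, q, γ⟩ ⟨hθ, ⟨hq0, hq1⟩, hγ⟩
  have hE : ∀ i, 1 - exp (-θ * U i) ≠ 0 := fun i =>
    one_sub_exp_neg_mul_ne_zero (mul_ne_zero hθ.ne' (hU i))
  refine ContDiffAt.contDiffWithinAt ?_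
  unfold ell
  fun_prop (disch := first | exact hθ.ne' | exact hq0.ne' | exact hγ.ne' | exact hE _ |
    exact sub_ne_zero.2 hq1.ne')

end Marginals

theorem EM_surrogate_hessian_negative_definite_general {n : ℕ} (U C1 C2 C3 : Fin n → ℝ)
    (hU : ∀ i, 0 < U i)
    (hC3 : ∀ i, C3 i ∈ Set.Icc (0 : ℝ) 1) (hsum : ∀ i, C1 i + C2 i + C3 i = 1)
    (hS1 : 0 < ∑ i, C1 i) (hS2 : 0 < ∑ i, C2 i) (hS3 : 0 < ∑ i, C3 i) :
    -- twice continuous differentiability on the open domain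
    ContDiffOn ℝ 2 (fun p : ℝ × ℝ × ℝ => ell U C1 C2 C3 p.1 p.2.1 p.2.2)
      (Set.Ioi (0 : ℝ) ×ˢ Set.Ioo (0 : ℝ) 1 ×ˢ Set.Ioi (0 : ℝ)) ∧
    ∀ θ q γ : ℝ, 0 < θ → q ∈ Set.Ioo (0 : ℝ) 1 → 0 < γ →
      -- pure second-order partial derivatives, strictly negative
      (HasDerivAt (deriv (fun t => ell U C1 C2 C3 t q γ))
        (-(∑ i, C2 i) / θ ^ 2
          - ∑ i, C3 i * U i ^ 2 * Real.exp (-θ * U i) / (1 - Real.exp (-θ * U i)) ^ 2) θ ∧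
       -(∑ i, C2 i) / θ ^ 2
          - ∑ i, C3 i * U i ^ 2 * Real.exp (-θ * U i) / (1 - Real.exp (-θ * U i)) ^ 2 < 0) ∧
      (HasDerivAt (deriv (fun s => ell U C1 C2 C3 θ s γ))
        (-(∑ i, C2 i) / q ^ 2 - (∑ i, C3 i) / (1 - q) ^ 2) q ∧
       -(∑ i, C2 i) / q ^ 2 - (∑ i, C3 i) / (1 - q) ^ 2 < 0) ∧
      (HasDerivAt (deriv (fun r => ell U C1 C2 C3 θ q r))
        (-(∑ i, (1 - C2 i)) / γ ^ 2) γ ∧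
       -(∑ i, (1 - C2 i)) / γ ^ 2 < 0) ∧
      -- mixed second-order partial derivatives vanish
      HasDerivAt (fun s => deriv (fun t => ell U C1 C2 C3 t s γ) θ) 0 q ∧
      HasDerivAt (fun r => deriv (fun t => ell U C1 C2 C3 t q r) θ) 0 γ ∧
      HasDerivAt (fun r => deriv (fun s => ell U C1 C2 C3 θ s r) q) 0 γ ∧
      -- the (diagonal) Hessian is negative definite
      (∀ x : Fin 3 → ℝ, x ≠ 0 →
        x ⬝ᵥ (Matrix.diagonal
          ![-(∑ i, C2 i) / θ ^ 2
              - ∑ i, C3 i * U i ^ 2 * Real.exp (-θ * U i) / (1 - Real.exp (-θ * U i)) ^ 2,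
            -(∑ i, C2 i) / q ^ 2 - (∑ i, C3 i) / (1 - q) ^ 2,
            -(∑ i, (1 - C2 i)) / γ ^ 2]).mulVec x < 0) := by
  have hU0 : ∀ i, U i ≠ 0 := fun i => (hU i).ne'
  refine ⟨contDiffOn_ell U C1 C2 C3 hU0, fun θ q γ hθ ⟨hq0, hq1⟩ hγ => ?_⟩
  have hC13 : ∑ i, (C1 i + C3 i) = ∑ i, (1 - C2 i) :=
    sum_congr rfl fun i _ => by linarith [hsum i]
  have hθθ : -(∑ i, C2 i) / θ ^ 2
      - ∑ i, C3 i * U i ^ 2 * exp (-θ * U i) / (1 - exp (-θ * U i)) ^ 2 < 0 := by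
    rw [neg_div]
    linarith [div_pos hS2 (pow_pos hθ 2), sum_nonneg fun i (_ : i ∈ univ) => div_nonneg
      (mul_nonneg (mul_nonneg (hC3 i).1 (sq_nonneg (U i))) (exp_nonneg (-θ * U i)))
      (sq_nonneg (1 - exp (-θ * U i)))]
  have hqq : -(∑ i, C2 i) / q ^ 2 - (∑ i, C3 i) / (1 - q) ^ 2 < 0 := by
    rw [neg_div]
    linarith [div_pos hS2 (pow_pos hq0 2), div_pos hS3 (pow_pos (sub_pos.2 hq1) 2)]
  have hγγ : -(∑ i, (1 - C2 i)) / γ ^ 2 < 0 := by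
    rw [← hC13, sum_add_distrib]
    exact div_neg_of_neg_of_pos (by linarith) (by positivity)
  refine ⟨⟨?_, hθθ⟩, ⟨?_, hqq⟩, ⟨?_, hγγ⟩, ?_, ?_, ?_, fun x hx => ?_⟩
  · rw [deriv_ell_theta]; exact hasDerivAt_deriv_ellTheta U C1 C2 C3 hU0 hθ.ne'
  · rw [deriv_ell_q]; exact hasDerivAt_deriv_ellQ C2 C3 hq0.ne' hq1.ne
  · rw [deriv_ell_gamma, ← hC13]; exact hasDerivAt_deriv_ellGamma U C1 C2 C3 hγ.ne'
  · simp only [deriv_ell_theta]; exact hasDerivAt_const _ _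
  · simp only [deriv_ell_theta]; exact hasDerivAt_const _ _
  · simp only [deriv_ell_q]; exact hasDerivAt_const _ _
  · refine dotProduct_diagonal_mulVec_neg (fun j => ?_) hx
    fin_cases j
    exacts [hθθ, hqq, hγγ]

/-- The Hessian of the EM surrogate is diagonal with strictly negative diagonal entries, hence
negative definite, everywhere on `(0,∞) × (0,1) × (0,∞)`: `ℓ` is `C²` there, the mixed
second-order partials vanish identically, and the pure second-order partials are the stated
strictly negative quantities. -/
theorem EM_surrogate_hessian_negative_definite {n : ℕ} (hn : 1 ≤ n) (U C1 C2 C3 : Fin n → ℝ)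
    (hU : ∀ i, 0 < U i)
    (hC1 : ∀ i, C1 i ∈ Set.Icc (0 : ℝ) 1) (hC2 : ∀ i, C2 i ∈ Set.Icc (0 : ℝ) 1)
    (hC3 : ∀ i, C3 i ∈ Set.Icc (0 : ℝ) 1) (hsum : ∀ i, C1 i + C2 i + C3 i = 1)
    (hS1 : 0 < ∑ i, C1 i) (hS2 : 0 < ∑ i, C2 i) (hS3 : 0 < ∑ i, C3 i) :
    -- twice continuous differentiability on the open domain
    ContDiffOn ℝ 2 (fun p : ℝ × ℝ × ℝ => ell U C1 C2 C3 p.1 p.2.1 p.2.2)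
      (Set.Ioi (0 : ℝ) ×ˢ Set.Ioo (0 : ℝ) 1 ×ˢ Set.Ioi (0 : ℝ)) ∧
    ∀ θ q γ : ℝ, 0 < θ → q ∈ Set.Ioo (0 : ℝ) 1 → 0 < γ →
      -- pure second-order partial derivatives, strictly negative
      (HasDerivAt (deriv (fun t => ell U C1 C2 C3 t q γ))
        (-(∑ i, C2 i) / θ ^ 2
          - ∑ i, C3 i * U i ^ 2 * Real.exp (-θ * U i) / (1 - Real.exp (-θ * U i)) ^ 2) θ ∧
       -(∑ i, C2 i) / θ ^ 2
          - ∑ i, C3 i * U i ^ 2 * Real.exp (-θ * U i) / (1 - Real.exp (-θ * U i)) ^ 2 < 0) ∧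
      (HasDerivAt (deriv (fun s => ell U C1 C2 C3 θ s γ))
        (-(∑ i, C2 i) / q ^ 2 - (∑ i, C3 i) / (1 - q) ^ 2) q ∧
       -(∑ i, C2 i) / q ^ 2 - (∑ i, C3 i) / (1 - q) ^ 2 < 0) ∧
      (HasDerivAt (deriv (fun r => ell U C1 C2 C3 θ q r))
        (-(∑ i, (1 - C2 i)) / γ ^ 2) γ ∧
       -(∑ i, (1 - C2 i)) / γ ^ 2 < 0) ∧
      -- mixed second-order partial derivatives vanish
      HasDerivAt (fun s => deriv (fun t => ell U C1 C2 C3 t s γ) θ) 0 q ∧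
      HasDerivAt (fun r => deriv (fun t => ell U C1 C2 C3 t q r) θ) 0 γ ∧
      HasDerivAt (fun r => deriv (fun s => ell U C1 C2 C3 θ s r) q) 0 γ ∧
      -- the (diagonal) Hessian is negative definite
      (∀ x : Fin 3 → ℝ, x ≠ 0 →
        x ⬝ᵥ (Matrix.diagonal
          ![-(∑ i, C2 i) / θ ^ 2
              - ∑ i, C3 i * U i ^ 2 * Real.exp (-θ * U i) / (1 - Real.exp (-θ * U i)) ^ 2,
            -(∑ i, C2 i) / q ^ 2 - (∑ i, C3 i) / (1 - q) ^ 2,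
            -(∑ i, (1 - C2 i)) / γ ^ 2]).mulVec x < 0) :=
  EM_surrogate_hessian_negative_definite_general U C1 C2 C3 hU hC3 hsum hS1 hS2 hS3
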